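/- The combined advantage adv = (1/2 + adv1)(1/2 + adv2)/(1/2 - 2·adv1·adv2) - 1/2 is nonnegative whenever adv1, adv2 ≥ 0 and adv1, adv2 ≤ 1/2, and is at least max(adv1, adv2) under these hypotheses. -/

import Mathlib

/-! The excess of the combined advantage over `adv1` is `2·adv2·(1/2 + adv1)² / (1/2 - 2·adv1·adv2)`,
a nonnegative quantity once the denominator is positive; by symmetry the same holds for `adv2`. -/

noncomputable def combinedAdvantage (a b : ℝ) : ℝ :=
  (1/2 + a) * (1/2 + b) / (1/2 - 2 * a * b) - 1/2

lemma combinedAdvantage_comm (a b : ℝ) : combinedAdvantage a b = combinedAdvantage b a := by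
  unfold combinedAdvantage
  ring_nf

lemma combinedAdvantage_sub_left {a b : ℝ} (hab : a * b ≠ 1/4) :
    combinedAdvantage a b - a = 2 * b * (1/2 + a) ^ 2 / (1/2 - 2 * a * b) := by
  have hd : 1/2 - 2 * a * b ≠ 0 := by contrapose! hab; linarith
  unfold combinedAdvantage
  rw [eq_div_iff hd, sub_mul, sub_mul, div_mul_cancel₀ _ hd]
  ring

lemma le_combinedAdvantage_left {a b : ℝ} (hb : 0 ≤ b) (hab : a * b < 1/4) :
    a ≤ combinedAdvantage a b := by
  have hd : 0 < 1/2 - 2 * a * b := by linarith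
  have hgap := combinedAdvantage_sub_left hab.ne
  have : 0 ≤ 2 * b * (1/2 + a) ^ 2 / (1/2 - 2 * a * b) := by positivity
  linarith

lemma le_combinedAdvantage_right {a b : ℝ} (ha : 0 ≤ a) (hab : a * b < 1/4) :
    b ≤ combinedAdvantage a b :=
  combinedAdvantage_comm a b ▸ le_combinedAdvantage_left ha (mul_comm a b ▸ hab)

theorem combined_advantage_nonneg_general (adv adv1 adv2 : ℝ)
    (h1 : 0 ≤ adv1) (h2 : 0 ≤ adv2)
    (hlt : adv1 * adv2 < 1/4)
    (hadv : adv = (1/2 + adv1)*(1/2 + adv2)/(1/2 - 2*adv1*adv2) - 1/2) :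
    0 ≤ adv ∧ max adv1 adv2 ≤ adv := by
  change adv = combinedAdvantage adv1 adv2 at hadv
  have h1a : adv1 ≤ adv := hadv ▸ le_combinedAdvantage_left h2 hlt
  have h2a : adv2 ≤ adv := hadv ▸ le_combinedAdvantage_right h1 hlt
  exact ⟨h1.trans h1a, max_le h1a h2a⟩

theorem combined_advantage_nonneg (adv adv1 adv2 : ℝ)
    (h1 : 0 ≤ adv1) (h1' : adv1 ≤ 1/2) (h2 : 0 ≤ adv2) (h2' : adv2 ≤ 1/2)
    (hlt : adv1 * adv2 < 1/4)
    (hadv : adv = (1/2 + adv1)*(1/2 + adv2)/(1/2 - 2*adv1*adv2) - 1/2) :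
    0 ≤ adv ∧ max adv1 adv2 ≤ adv :=
  combined_advantage_nonneg_general adv adv1 adv2 h1 h2 hlt hadv
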